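/- arXiv:2106.03163 — 2 statements merged into one kernel-verified Lean document; each statement's English description precedes it below -/
import Mathlib

section
/- Let D ⊆ ℝ be nonempty with finite supremum s_D, let T : ℝⁿ → ℝ, x ∈ Dⁿ, and α ∈ (0,1). Let ℓ ∈ [0,1]ⁿ be such that P(U_{(i)} ≥ ℓ_{(i)} for all 1 ≤ i ≤ n) ≥ 1 − α, where U = (U_1,…,U_n) are i.i.d. Uniform(0,1) with order statistics U_{(1)} ≤ … ≤ U_{(n)}. Then b^α_{D,T}(x) ≤ b_{D,T}(x,ℓ). -/
open MeasureTheory Set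

/-- The sorted rearrangement (order statistics) of a finite real vector:
`sortedVec x i` is the (i+1)-st order statistic `x_{(i+1)}` (0-indexed). -/
noncomputable def sortedVec {n : ℕ} (x : Fin n → ℝ) : Fin n → ℝ :=
  x ∘ ⇑(Tuple.sort x)

/-- The induced mean `m(x, ℓ) = s - ∑ ℓ_{(i)} (x_{(i+1)} - x_{(i)})`, with `x_{(n+1)} := s`. -/
noncomputable def inducedMean {n : ℕ} (s : ℝ) (x ℓ : Fin n → ℝ) : ℝ :=
  s - ∑ i : Fin n, sortedVec ℓ i * ((Fin.snoc (sortedVec x) s : Fin (n+1) → ℝ) i.succ - sortedVec x i)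

/-- `S_{D,T}(x) = {y ∈ Dⁿ : T y ≤ T x}`. -/
def SsetD {n : ℕ} (D : Set ℝ) (T : (Fin n → ℝ) → ℝ) (x : Fin n → ℝ) : Set (Fin n → ℝ) :=
  {y | (∀ i, y i ∈ D) ∧ T y ≤ T x}

/-- `b_{D,T}(x, u) = sup_{z ∈ S_{D,T}(x)} m_{sup D}(z, u)`. -/
noncomputable def bfun {n : ℕ} (D : Set ℝ) (T : (Fin n → ℝ) → ℝ) (x u : Fin n → ℝ) : ℝ :=
  sSup ((fun z => inducedMean (sSup D) z u) '' SsetD D T x)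

/-- The uniform probability measure on `[0,1]`. -/
noncomputable def unif01 : Measure ℝ := volume.restrict (Icc (0:ℝ) 1)

/-- The law of an i.i.d. sample of size `n` from Uniform(0,1). -/
noncomputable def unifPi (n : ℕ) : Measure (Fin n → ℝ) := Measure.pi fun _ => unif01

/-- The `p`-quantile of the random variable `Y` under `μ`:
`Q(p, Y) = inf {y : P(Y ≤ y) ≥ p}`. -/
noncomputable def rquantile {Ω : Type*} [MeasurableSpace Ω] (μ : Measure Ω)
    (Y : Ω → ℝ) (p : ℝ) : ℝ :=
  sInf {y : ℝ | ENNReal.ofReal p ≤ μ {ω | Y ω ≤ y}}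

/-- The upper confidence bound `b^α_{D,T}(x) = Q(1 - α, b_{D,T}(x, U))`, `U` i.i.d. Uniform(0,1). -/
noncomputable def ucb {n : ℕ} (D : Set ℝ) (T : (Fin n → ℝ) → ℝ) (α : ℝ)
    (x : Fin n → ℝ) : ℝ :=
  rquantile (unifPi n) (bfun D T x) (1 - α)

/-- The stairstep function `G_{x,ℓ}` with top value at `s`. -/
noncomputable def stairstep {n : ℕ} (s : ℝ) (x ℓ : Fin n → ℝ) (t : ℝ) : ℝ :=
  if s ≤ t then 1 else sSup ({0} ∪ (sortedVec ℓ '' {i | sortedVec x i ≤ t}))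

/-- The `k`-th smallest value (1-indexed) among `m 0, …, m (L-1)`. -/
noncomputable def kthSmallest {L : ℕ} (m : Fin L → ℝ) (k : ℕ) : ℝ :=
  sInf {y : ℝ | k ≤ Nat.card {j : Fin L // m j ≤ y}}

/-! Every order statistic of `U` lies in `[0, 1]`, and the induced mean `m(z, u)` is antitone in
the order statistics of `u` (all gaps `z_{(i+1)} - z_{(i)}` are nonnegative once `z_{(n+1)} = sup D`).
Hence `b(x, U) ≤ b(x, ℓ)` on the event `{U_{(i)} ≥ ℓ_{(i)} ∀ i}`, which has probability at least
`1 - α`, while `b(x, U) ≥ m(x, 1)` almost surely, so the set defining the quantile is bounded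
below and its infimum is at most `b(x, ℓ)`. -/

lemma sortedVec_le_snoc_succ {n : ℕ} {s : ℝ} {z : Fin n → ℝ} (hz : ∀ i, z i ≤ s) (i : Fin n) :
    sortedVec z i ≤ (Fin.snoc (sortedVec z) s : Fin (n + 1) → ℝ) i.succ := by
  rcases eq_or_lt_of_le (Nat.succ_le_of_lt i.isLt) with h | h
  · have hi : i.succ = Fin.last n := by ext; simp only [Fin.val_succ, Fin.val_last]; omega
    rw [hi, Fin.snoc_last]
    exact hz _
  · have hi : i.succ = Fin.castSucc ⟨i.val + 1, h⟩ := by ext; simp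
    rw [hi, Fin.snoc_castSucc]
    exact Tuple.monotone_sort z (by simp [Fin.le_def])

lemma inducedMean_le_of_sortedVec_le {n : ℕ} {s : ℝ} {z ℓ u : Fin n → ℝ} (hz : ∀ i, z i ≤ s)
    (h : ∀ i, sortedVec ℓ i ≤ sortedVec u i) : inducedMean s z u ≤ inducedMean s z ℓ :=
  sub_le_sub_left (Finset.sum_le_sum fun i _ =>
    mul_le_mul_of_nonneg_right (h i) (sub_nonneg.2 (sortedVec_le_snoc_succ hz i))) s

lemma inducedMean_le {n : ℕ} {s : ℝ} {z u : Fin n → ℝ} (hz : ∀ i, z i ≤ s)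
    (hu : ∀ i, 0 ≤ sortedVec u i) : inducedMean s z u ≤ s := by
  simpa [inducedMean, sortedVec] using inducedMean_le_of_sortedVec_le (ℓ := 0) hz hu

lemma rquantile_le {Ω : Type*} [MeasurableSpace Ω] {μ : Measure Ω} {Y : Ω → ℝ} {p c y : ℝ}
    (hp : 0 < p) (hY : ∀ᵐ ω ∂μ, c ≤ Y ω) (hy : ENNReal.ofReal p ≤ μ {ω | Y ω ≤ y}) :
    rquantile μ Y p ≤ y := by
  refine csInf_le ⟨c, fun y' hy' => ?_⟩ hy
  by_contra! hlt
  have hnull : μ {ω | Y ω ≤ y'} = 0 :=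
    measure_mono_null (fun ω hω => not_le.2 (lt_of_le_of_lt hω hlt)) (ae_iff.1 hY)
  have : ENNReal.ofReal p ≤ 0 := hnull ▸ hy'
  linarith [ENNReal.ofReal_eq_zero.1 (nonpos_iff_eq_zero.1 this)]

instance : SigmaFinite unif01 := by
  unfold unif01; infer_instance

lemma ae_unifPi_mem_Icc (n : ℕ) : ∀ᵐ u ∂unifPi n, ∀ i, u i ∈ Icc (0 : ℝ) 1 :=
  Filter.eventually_all.2 fun _ => Measure.tendsto_eval_ae_ae.eventually
    (ae_restrict_mem measurableSet_Icc)

section bfun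

variable {n : ℕ} {D : Set ℝ} {T : (Fin n → ℝ) → ℝ} {x : Fin n → ℝ}

lemma le_sSup_of_mem_SsetD (hbdd : BddAbove D) {z : Fin n → ℝ} (hz : z ∈ SsetD D T x)
    (i : Fin n) : z i ≤ sSup D :=
  le_csSup hbdd (hz.1 i)

lemma bddAbove_inducedMean_image (hbdd : BddAbove D) {u : Fin n → ℝ}
    (hu : ∀ i, 0 ≤ sortedVec u i) :
    BddAbove ((fun z => inducedMean (sSup D) z u) '' SsetD D T x) := by
  refine ⟨sSup D, ?_⟩
  rintro _ ⟨z, hz, rfl⟩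
  exact inducedMean_le (le_sSup_of_mem_SsetD hbdd hz) hu

lemma bfun_le_of_sortedVec_le (hbdd : BddAbove D) (hx : ∀ i, x i ∈ D) {ℓ u : Fin n → ℝ}
    (hℓ : ∀ i, 0 ≤ sortedVec ℓ i) (h : ∀ i, sortedVec ℓ i ≤ sortedVec u i) :
    bfun D T x u ≤ bfun D T x ℓ := by
  refine csSup_le ⟨_, x, ⟨hx, le_rfl⟩, rfl⟩ ?_
  rintro _ ⟨z, hz, rfl⟩
  exact (inducedMean_le_of_sortedVec_le (le_sSup_of_mem_SsetD hbdd hz) h).trans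
    (le_csSup (bddAbove_inducedMean_image hbdd hℓ) ⟨z, hz, rfl⟩)

lemma inducedMean_one_le_bfun (hbdd : BddAbove D) (hx : ∀ i, x i ∈ D) {u : Fin n → ℝ}
    (hu : ∀ i, u i ∈ Icc (0 : ℝ) 1) :
    inducedMean (sSup D) x 1 ≤ bfun D T x u :=
  (inducedMean_le_of_sortedVec_le (u := 1) (fun i => le_csSup hbdd (hx i))
      fun _ => (hu _).2).trans
    (le_csSup (bddAbove_inducedMean_image hbdd fun _ => (hu _).1) ⟨x, ⟨hx, le_rfl⟩, rfl⟩)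

end bfun

theorem stmt3_general {n : ℕ} (D : Set ℝ) (hbdd : BddAbove D)
    (T : (Fin n → ℝ) → ℝ) (x : Fin n → ℝ) (hx : ∀ i, x i ∈ D)
    (α : ℝ) (hα : α ∈ Set.Ioo (0:ℝ) 1)
    (ℓ : Fin n → ℝ) (hℓ : ∀ i, ℓ i ∈ Set.Icc (0:ℝ) 1)
    (hcov : ENNReal.ofReal (1 - α)
      ≤ unifPi n {u | ∀ i : Fin n, sortedVec ℓ i ≤ sortedVec u i}) :
    ucb D T α x ≤ bfun D T x ℓ := by
  have hlower : ∀ᵐ u ∂unifPi n, inducedMean (sSup D) x 1 ≤ bfun D T x u :=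
    (ae_unifPi_mem_Icc n).mono fun u hu => inducedMean_one_le_bfun hbdd hx hu
  have hevent : {u : Fin n → ℝ | ∀ i, sortedVec ℓ i ≤ sortedVec u i}
      ⊆ {u | bfun D T x u ≤ bfun D T x ℓ} :=
    fun u hu => bfun_le_of_sortedVec_le hbdd hx (fun _ => (hℓ _).1) hu
  exact rquantile_le (sub_pos.2 hα.2) hlower (hcov.trans (measure_mono hevent))

/-- if `ℓ ∈ [0,1]ⁿ` satisfies `P(∀ i, U_{(i)} ≥ ℓ_{(i)}) ≥ 1 - α`
for i.i.d. Uniform(0,1) order statistics, then `b^α_{D,T}(x) ≤ b_{D,T}(x,ℓ)`. -/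
theorem stmt3 {n : ℕ} (D : Set ℝ) (hD : D.Nonempty) (hbdd : BddAbove D)
    (T : (Fin n → ℝ) → ℝ) (x : Fin n → ℝ) (hx : ∀ i, x i ∈ D)
    (α : ℝ) (hα : α ∈ Set.Ioo (0:ℝ) 1)
    (ℓ : Fin n → ℝ) (hℓ : ∀ i, ℓ i ∈ Set.Icc (0:ℝ) 1)
    (hcov : ENNReal.ofReal (1 - α)
      ≤ unifPi n {u | ∀ i : Fin n, sortedVec ℓ i ≤ sortedVec u i}) :
    ucb D T α x ≤ bfun D T x ℓ :=
  stmt3_general D hbdd T x hx α hα ℓ hℓ hcov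
end

section
/- Let s ∈ ℝ and let ν be a Borel probability measure on (−∞, s] with finite mean μ and CDF F. Let X = (X_1,…,X_n) be i.i.d. with law ν, let ℓ ∈ [0,1]ⁿ, and let α ∈ (0,1). If P( F(t) ≥ G_{X,ℓ}(t) for all t ∈ ℝ ) ≥ 1 − α, then P( m(X,ℓ) ≥ μ ) ≥ 1 − α, where m(X,ℓ) := s − Σ_{i=1}^n ℓ_{(i)}(X_{(i+1)} − X_{(i)}) with X_{(1)} ≤ … ≤ X_{(n)} the order statistics of X and X_{(n+1)} := s. -/
open MeasureTheory Set

/-!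
Almost surely every `X i ≤ s`. On that event, if `G_{X,ℓ} ≤ F` then on each gap
`(X_{(i)}, X_{(i+1)})` we have `ℓ_{(i)} ≤ G_{X,ℓ} ≤ F`, so
`s - m(X,ℓ) = ∑ ℓ_{(i)} (X_{(i+1)} - X_{(i)}) ≤ ∫_{X_{(1)}}^s F ≤ ∫_{-∞}^s F = s - μ`,
the last equality being the tail formula `E[s - Y] = ∫_0^∞ P(s - Y ≥ u) du`. Hence the event
`{G_{X,ℓ} ≤ F}` is almost surely contained in `{m(X,ℓ) ≥ μ}`.
-/

section TailIntegral

variable {ν : Measure ℝ} [IsProbabilityMeasure ν] {s : ℝ}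

lemma setOf_le_sub_eq_Iic (s u : ℝ) : {t : ℝ | u ≤ s - t} = Iic (s - u) := by
  ext t
  simp [le_sub_comm]

lemma integrableOn_measureReal_Iic_sub (hsupp : ∀ᵐ t ∂ν, t ≤ s) (hint : Integrable id ν) :
    IntegrableOn (fun u => ν.real (Iic (s - u))) (Ioi 0) := by
  have hgap : Integrable (fun t => s - t) ν := (integrable_const s).sub hint
  have hlayer := lintegral_eq_lintegral_meas_le ν (hsupp.mono fun t ht => sub_nonneg.2 ht)
    hgap.aemeasurable
  simp_rw [setOf_le_sub_eq_Iic] at hlayer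
  have hanti : Antitone fun u => ν (Iic (s - u)) := fun u v huv =>
    measure_mono (Iic_subset_Iic.2 (by linarith))
  exact integrable_toReal_of_lintegral_ne_top hanti.measurable.aemeasurable
    (hlayer ▸ hgap.lintegral_lt_top.ne)

lemma integral_measureReal_Iic_sub (hsupp : ∀ᵐ t ∂ν, t ≤ s) (hint : Integrable id ν) :
    ∫ u in Ioi 0, ν.real (Iic (s - u)) = s - ∫ t, t ∂ν := by
  have hgap : Integrable (fun t => s - t) ν := (integrable_const s).sub hint
  have hlayer := hgap.integral_eq_integral_meas_le (hsupp.mono fun t ht => sub_nonneg.2 ht)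
  simp_rw [setOf_le_sub_eq_Iic] at hlayer
  rw [← hlayer]
  simpa using integral_sub (integrable_const s) hint

lemma intervalIntegral_measureReal_Iic_le (hsupp : ∀ᵐ t ∂ν, t ≤ s) (hint : Integrable id ν)
    {a : ℝ} (ha : a ≤ s) :
    ∫ t in a..s, ν.real (Iic t) ≤ s - ∫ t, t ∂ν := calc
  ∫ t in a..s, ν.real (Iic t) = ∫ u in Ioc 0 (s - a), ν.real (Iic (s - u)) := by
    rw [← intervalIntegral.integral_of_le (sub_nonneg.2 ha),
      intervalIntegral.integral_comp_sub_left (fun t => ν.real (Iic t)), sub_sub_cancel, sub_zero]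
  _ ≤ ∫ u in Ioi 0, ν.real (Iic (s - u)) :=
    setIntegral_mono_set (integrableOn_measureReal_Iic_sub hsupp hint)
      (ae_of_all _ fun _ => measureReal_nonneg) Ioc_subset_Ioi_self.eventuallyLE
  _ = s - ∫ t, t ∂ν := integral_measureReal_Iic_sub hsupp hint

end TailIntegral

lemma sum_intervalIntegral_castSucc_succ {E : Type*} [NormedAddCommGroup E] [NormedSpace ℝ E]
    {f : ℝ → E} {μ : Measure ℝ} (hf : ∀ a b, IntervalIntegrable f μ a b) {n : ℕ}
    (w : Fin (n + 1) → ℝ) :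
    ∑ i : Fin n, ∫ t in w i.castSucc..w i.succ, f t ∂μ = ∫ t in w 0..w (Fin.last n), f t ∂μ := by
  induction n with
  | zero => simp
  | succ n ih =>
    have h := ih (w ∘ Fin.castSucc)
    simp only [Function.comp_apply, ← Fin.succ_castSucc, Fin.castSucc_zero] at h
    rw [Fin.sum_univ_castSucc, h, Fin.succ_last]
    exact intervalIntegral.integral_add_adjacent_intervals (hf _ _) (hf _ _)

lemma sum_mul_sub_le_intervalIntegral {f : ℝ → ℝ} (hf : ∀ a b, IntervalIntegrable f volume a b)
    {n : ℕ} {w : Fin (n + 1) → ℝ} (hw : Monotone w) {c : Fin n → ℝ}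
    (hc : ∀ i, ∀ t ∈ Ioo (w i.castSucc) (w i.succ), c i ≤ f t) :
    ∑ i, c i * (w i.succ - w i.castSucc) ≤ ∫ t in w 0..w (Fin.last n), f t := by
  rw [← sum_intervalIntegral_castSucc_succ hf]
  refine Finset.sum_le_sum fun i _ => ?_
  calc c i * (w i.succ - w i.castSucc) = ∫ _ in w i.castSucc..w i.succ, c i := by
        rw [intervalIntegral.integral_const, smul_eq_mul, mul_comm]
    _ ≤ ∫ t in w i.castSucc..w i.succ, f t :=
        intervalIntegral.integral_mono_on_of_le_Ioo (hw i.castSucc_le_succ)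
          intervalIntegrable_const (hf _ _) (hc i)

lemma monotone_snoc {α : Type*} [Preorder α] {n : ℕ} {x : Fin n → α} (hx : Monotone x) {s : α}
    (hs : ∀ i, x i ≤ s) : Monotone (Fin.snoc x s : Fin (n + 1) → α) := by
  intro a b hab
  induction b using Fin.lastCases with
  | last =>
    induction a using Fin.lastCases with
    | last => exact le_rfl
    | cast a => simpa using hs a
  | cast b =>
    induction a using Fin.lastCases with
    | last => exact absurd hab (Fin.castSucc_lt_last b).not_ge
    | cast a => simpa using hx (Fin.castSucc_le_castSucc_iff.1 hab)

lemma sortedVec_le_stairstep {n : ℕ} {s t : ℝ} {x ℓ : Fin n → ℝ} {i : Fin n}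
    (hi : sortedVec x i ≤ t) (ht : t < s) : sortedVec ℓ i ≤ stairstep s x ℓ t := by
  rw [stairstep, if_neg ht.not_ge]
  exact le_csSup (Set.toFinite _).bddAbove (Or.inr ⟨i, hi, rfl⟩)

lemma exists_sub_inducedMean_le_intervalIntegral {n : ℕ} {s : ℝ} {x ℓ : Fin n → ℝ} {F : ℝ → ℝ}
    (hF : Monotone F) (hx : ∀ i, x i ≤ s) (hG : ∀ t, stairstep s x ℓ t ≤ F t) :
    ∃ a ≤ s, s - inducedMean s x ℓ ≤ ∫ t in a..s, F t := by
  set w : Fin (n + 1) → ℝ := Fin.snoc (sortedVec x) s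
  have hw : Monotone w := monotone_snoc (Tuple.monotone_sort x) fun i => hx _
  have hws : w (Fin.last n) = s := Fin.snoc_last _ _
  have key := sum_mul_sub_le_intervalIntegral (fun _ _ => hF.intervalIntegrable) hw
    (c := sortedVec ℓ) fun i t ht => by
      have hts : t < s := ht.2.trans_le ((hw (Fin.le_last _)).trans_eq hws)
      exact (sortedVec_le_stairstep (by simpa [w] using ht.1.le) hts).trans (hG t)
  refine ⟨w 0, hws ▸ hw (Fin.zero_le _), ?_⟩
  rw [inducedMean, sub_sub_cancel]
  simpa only [w, Fin.snoc_castSucc, Fin.snoc_last] using key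

theorem stmt8_general {n : ℕ} (s : ℝ) (ν : Measure ℝ) [IsProbabilityMeasure ν]
    (hsupp : ∀ᵐ t ∂ν, t ≤ s) (hint : Integrable id ν)
    (μmean : ℝ) (hmean : μmean = ∫ t, t ∂ν)
    (ℓ : Fin n → ℝ)
    (α : ℝ)
    (hlcb : ENNReal.ofReal (1 - α)
      ≤ (Measure.pi fun _ : Fin n => ν)
          {x | ∀ t : ℝ, stairstep s x ℓ t ≤ (ν (Set.Iic t)).toReal}) :
    ENNReal.ofReal (1 - α)
      ≤ (Measure.pi fun _ : Fin n => ν) {x | μmean ≤ inducedMean s x ℓ} := by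
  have hsample : ∀ᵐ x ∂(Measure.pi fun _ : Fin n => ν), ∀ i, x i ≤ s :=
    ae_all_iff.2 fun i => (Measure.tendsto_eval_ae_ae (μ := fun _ => ν) (i := i)).eventually hsupp
  have hcdf : Monotone fun t => ν.real (Iic t) := fun _ _ h => measureReal_mono (Iic_subset_Iic.2 h)
  refine hlcb.trans (measure_mono_ae ?_)
  filter_upwards [hsample] with x hx hG
  obtain ⟨a, has, hsum⟩ := exists_sub_inducedMean_le_intervalIntegral hcdf hx hG
  have htail := intervalIntegral_measureReal_Iic_le hsupp hint has
  change μmean ≤ inducedMean s x ℓ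
  linarith

/-- if `G_{X,ℓ}` is a `(1-α)` lower confidence bound for the CDF of
`ν` (supported on `(-∞, s]`, mean `μ`), then `P(m(X,ℓ) ≥ μ) ≥ 1 - α`. -/
theorem stmt8 {n : ℕ} (s : ℝ) (ν : Measure ℝ) [IsProbabilityMeasure ν]
    (hsupp : ∀ᵐ t ∂ν, t ≤ s) (hint : Integrable id ν)
    (μmean : ℝ) (hmean : μmean = ∫ t, t ∂ν)
    (ℓ : Fin n → ℝ) (hℓ : ∀ i, ℓ i ∈ Set.Icc (0:ℝ) 1)
    (α : ℝ) (hα : α ∈ Set.Ioo (0:ℝ) 1)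
    (hlcb : ENNReal.ofReal (1 - α)
      ≤ (Measure.pi fun _ : Fin n => ν)
          {x | ∀ t : ℝ, stairstep s x ℓ t ≤ (ν (Set.Iic t)).toReal}) :
    ENNReal.ofReal (1 - α)
      ≤ (Measure.pi fun _ : Fin n => ν) {x | μmean ≤ inducedMean s x ℓ} :=
  stmt8_general s ν hsupp hint μmean hmean ℓ α hlcb
end
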